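/- arXiv:2106.10268 — 2 statements merged into one kernel-verified Lean document; each statement's English description precedes it below -/
import Mathlib

section
/- The function L_k(d) = Σ d(s,a) r(s,a) + (τ/k^c) Σ sqrt((d(s,a)+λ)/(ρ(s,a)+λ)) is β-smooth with β = 1/(4λ²): for all d, d' ∈ [0,1]^{S×A}, ‖∇L_k(d) − ∇L_k(d')‖_∞ ≤ β ‖d − d'‖_∞. -/
lemma key_sqrt_lip (lam m a b : ℝ) (hlam : 0 < lam) (hm : lam ≤ m)
    (ha : lam ≤ a) (hb : lam ≤ b) :
    |1 / Real.sqrt (a * m) - 1 / Real.sqrt (b * m)| ≤ |a - b| / (2 * lam ^ 2) := by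
  have hm0 : 0 < m := lt_of_lt_of_le hlam hm
  have ha0 : 0 < a := lt_of_lt_of_le hlam ha
  have hb0 : 0 < b := lt_of_lt_of_le hlam hb
  set sa := Real.sqrt (a * m) with hsa
  set sb := Real.sqrt (b * m) with hsb
  have hsa0 : 0 < sa := Real.sqrt_pos.2 (by positivity)
  have hsb0 : 0 < sb := Real.sqrt_pos.2 (by positivity)
  have hsa2 : sa ^ 2 = a * m := Real.sq_sqrt (by positivity)
  have hsb2 : sb ^ 2 = b * m := Real.sq_sqrt (by positivity)
  have hla : lam ≤ sa := (Real.le_sqrt hlam.le (by positivity)).2 (by nlinarith)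
  have hlb : lam ≤ sb := (Real.le_sqrt hlam.le (by positivity)).2 (by nlinarith)
  have hprod : lam * m ≤ sa * sb := by
    have h1 : Real.sqrt (lam * m) ≤ sa := Real.sqrt_le_sqrt (by nlinarith)
    have h2 : Real.sqrt (lam * m) ≤ sb := Real.sqrt_le_sqrt (by nlinarith)
    have h3 : Real.sqrt (lam * m) * Real.sqrt (lam * m) = lam * m :=
      Real.mul_self_sqrt (by positivity)
    nlinarith [Real.sqrt_nonneg (lam * m)]
  have heq : 1 / sa - 1 / sb = m * (b - a) / (sa * sb * (sb + sa)) := by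
    rw [div_sub_div _ _ hsa0.ne' hsb0.ne', div_eq_div_iff (by positivity) (by positivity)]
    have h : sb ^ 2 - sa ^ 2 = m * (b - a) := by rw [hsa2, hsb2]; ring
    linear_combination (sa * sb) * h
  rw [heq, abs_div, abs_of_pos (show (0:ℝ) < sa * sb * (sb + sa) by positivity), abs_mul,
    abs_of_pos hm0]
  rw [div_le_div_iff₀ (by positivity) (by positivity)]
  have habs : |b - a| = |a - b| := abs_sub_comm b a
  rw [habs]
  have hden : 2 * lam ^ 2 * m ≤ sa * sb * (sb + sa) := by
    nlinarith [mul_le_mul hprod (show 2 * lam ≤ sb + sa by linarith)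
      (by positivity) (by positivity)]
  nlinarith [abs_nonneg (a - b), mul_le_mul_of_nonneg_left hden (abs_nonneg (a - b))]

theorem stmt_3 {ι : Type*} [Fintype ι] (r ρ : ι → ℝ)
    (hr : ∀ i, r i ∈ Set.Icc (0:ℝ) 1)
    (hρ : ∀ i, ρ i ∈ Set.Icc (0:ℝ) 1)
    (lam τ c : ℝ) (hlam : 0 < lam) (hτ : τ ∈ Set.Ioo (0:ℝ) 1) (hc : 0 < c)
    (k : ℕ) (hk : 1 ≤ k)
    (G : (ι → ℝ) → ι → ℝ)
    (hG : G = fun d i => r i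
        + (τ / (2 * (k : ℝ) ^ c)) * (1 / Real.sqrt ((d i + lam) * (ρ i + lam))))
    (d d' : ι → ℝ) (hd : ∀ i, d i ∈ Set.Icc (0:ℝ) 1)
    (hd' : ∀ i, d' i ∈ Set.Icc (0:ℝ) 1) :
    ‖G d - G d'‖ ≤ (1 / (4 * lam ^ 2)) * ‖d - d'‖ := by
  have hK : (0:ℝ) ≤ (1 / (4 * lam ^ 2)) * ‖d - d'‖ := by positivity
  rw [pi_norm_le_iff_of_nonneg hK]
  intro i
  have hkc : (1:ℝ) ≤ (k : ℝ) ^ c := by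
    apply Real.one_le_rpow (by exact_mod_cast hk) hc.le
  have hC : τ / (2 * (k : ℝ) ^ c) ≤ 1 / 2 := by
    rw [div_le_div_iff₀ (by linarith) (by norm_num)]
    nlinarith [hτ.2, hτ.1]
  have hC0 : 0 ≤ τ / (2 * (k : ℝ) ^ c) := div_nonneg hτ.1.le (by linarith)
  have hkey := key_sqrt_lip lam (ρ i + lam) (d i + lam) (d' i + lam) hlam
    (by linarith [(hρ i).1]) (by linarith [(hd i).1]) (by linarith [(hd' i).1])
  have hsub : (d i + lam) - (d' i + lam) = d i - d' i := by ring
  rw [hsub] at hkey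
  have hGi : (G d - G d') i = (τ / (2 * (k : ℝ) ^ c)) *
      (1 / Real.sqrt ((d i + lam) * (ρ i + lam)) -
       1 / Real.sqrt ((d' i + lam) * (ρ i + lam))) := by
    simp [hG]; ring
  rw [hGi, norm_mul, Real.norm_eq_abs, Real.norm_eq_abs, abs_of_nonneg hC0]
  have hdd : |d i - d' i| ≤ ‖d - d'‖ := by
    have := norm_le_pi_norm (d - d') i
    simpa [Real.norm_eq_abs] using this
  calc τ / (2 * (k : ℝ) ^ c) * |1 / Real.sqrt ((d i + lam) * (ρ i + lam)) -
        1 / Real.sqrt ((d' i + lam) * (ρ i + lam))|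
      ≤ (1/2) * (|d i - d' i| / (2 * lam ^ 2)) := by
        apply mul_le_mul hC hkey (abs_nonneg _) (by norm_num)
    _ ≤ (1/2) * (‖d - d'‖ / (2 * lam ^ 2)) := by
        apply mul_le_mul_of_nonneg_left _ (by norm_num)
        exact div_le_div_of_nonneg_right hdd (by positivity)
    _ = (1 / (4 * lam ^ 2)) * ‖d - d'‖ := by ring
end

section
/- Frank–Wolfe convergence with errors: let f_k be a sequence of concave functions on a convex set D ⊂ ℝ^n, each β-smooth (f_k(x+v) ≥ f_k(x)+⟨v,∇f_k(x)⟩−β‖v‖₂² for x, x+v ∈ D), ‖∇f_k‖_∞ ≤ B and f_k ≤ B on D, diameter of D at most 2 in ℓ₂. Suppose iterates satisfy d_{k} = (1−η)d_{k−1} + η u_k where ⟨u_k, ∇f_k(d_{k−1})⟩ ≥ ⟨d*, ∇f_k(d_{k−1})⟩ − ε₀ for a fixed d* ∈ D, and max_{d∈D} |f_{k+1}(d) − f_k(d)| ≤ δ_k with Σ_{i=0}^k (1−η)^i δ_{k−i} ≤ Δ for all k. Then f_{K+1}(d*) − f_{K+1}(d_K) ≤ 2B e^{−ηK} + ε₀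 + 4ηβ + 2Δ. -/
/-!
For one concave objective `F`, a Frank–Wolfe step `x ↦ (1 - η) x + η u` contracts the gap
`F d⋆ - F x` by the factor `1 - η` up to an additive `η ε₀ + 4βη²`: β-smoothness bounds the ascent
below by `η ⟪u - x, ∇F x⟫ - 4βη²` (the diameter is 2), the planning condition trades `u` for `d⋆`,
and concavity gives `F d⋆ - F x ≤ ⟪d⋆ - x, ∇F x⟫`. Replacing the objective `f k` by `f (k + 1)`
moves the gap by at most `2 δ k`. Unrolling this linear recursion, the initial gap `≤ 2B` decays
like `(1 - η)^K ≤ e^{-ηK}`, the constant error sums to at most `1/η` times itself, and the drift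
terms sum to at most `2Δ`.
-/

open Finset
open scoped Gradient InnerProductSpace

section

variable {E : Type*} [NormedAddCommGroup E] [InnerProductSpace ℝ E] [CompleteSpace E]
  {D : Set E} {F : E → ℝ} {x y : E}

theorem ConcaveOn.sub_le_inner_gradient (hF : ConcaveOn ℝ D F) (hx : x ∈ D) (hy : y ∈ D)
    (hFx : DifferentiableAt ℝ F x) : F y - F x ≤ ⟪y - x, ∇ F x⟫_ℝ := by
  let γ : ℝ →ᵃ[ℝ] E := AffineMap.lineMap x y
  have hFγ : HasFDerivAt F (InnerProductSpace.toDual ℝ E (∇ F x)) (γ 0) := by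
    simpa [γ] using hFx.hasGradientAt.hasFDerivAt
  have hderiv : HasDerivAt (F ∘ γ) ⟪y - x, ∇ F x⟫_ℝ 0 := by
    simpa [real_inner_comm] using hFγ.comp_hasDerivAt (0 : ℝ) AffineMap.hasDerivAt_lineMap
  have hslope := (hF.comp_affineMap γ).slope_le_of_hasDerivAt
    (x := 0) (y := 1) (by simpa [γ] using hx) (by simpa [γ] using hy) one_pos hderiv
  simpa [slope_def_field, γ] using hslope

theorem ConcaveOn.sub_le_of_frankWolfe_step {u z : E} {β η ε R : ℝ} (hF : ConcaveOn ℝ D F)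
    (hFx : DifferentiableAt ℝ F x)
    (hsmooth : ∀ x v : E, x ∈ D → x + v ∈ D →
      F (x + v) ≥ F x + ⟪v, ∇ F x⟫_ℝ - β * ‖v‖ ^ 2)
    (hβ : 0 ≤ β) (hη₀ : 0 ≤ η) (hη₁ : η ≤ 1) (hx : x ∈ D) (hu : u ∈ D) (hz : z ∈ D)
    (hux : ‖u - x‖ ≤ R) (hplan : ⟪u, ∇ F x⟫_ℝ ≥ ⟪z, ∇ F x⟫_ℝ - ε) :
    F z - F ((1 - η) • x + η • u) ≤ (1 - η) * (F z - F x) + η * ε + β * (η * R) ^ 2 := by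
  have hsegment : x + η • (u - x) = (1 - η) • x + η • u := by module
  have hnext : (1 - η) • x + η • u ∈ D := hF.1 hx hu (by linarith) hη₀ (by ring)
  have hascent := hsmooth x (η • (u - x)) hx (hsegment ▸ hnext)
  rw [hsegment, real_inner_smul_left, norm_smul, Real.norm_of_nonneg hη₀] at hascent
  have hgap := hF.sub_le_inner_gradient hx hz hFx
  rw [inner_sub_left] at hgap hascent
  have hlen : (η * ‖u - x‖) ^ 2 ≤ (η * R) ^ 2 := by gcongr
  linarith [mul_le_mul_of_nonneg_left hlen hβ, mul_le_mul_of_nonneg_left hgap hη₀,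
    mul_le_mul_of_nonneg_left hplan hη₀]

end

theorem le_pow_mul_add_sum_of_le_mul_add {R : Type*} [CommSemiring R] [PartialOrder R]
    [IsOrderedRing R] {a e : ℕ → R} {r : R} (hr : 0 ≤ r)
    (h : ∀ k, a (k + 1) ≤ r * a k + e (k + 1)) (K : ℕ) :
    a K ≤ r ^ K * a 0 + ∑ i ∈ range K, r ^ i * e (K - i) := by
  induction K with
  | zero => simp
  | succ K ih =>
    calc a (K + 1) ≤ r * a K + e (K + 1) := h K
      _ ≤ r * (r ^ K * a 0 + ∑ i ∈ range K, r ^ i * e (K - i)) + e (K + 1) := by gcongr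
      _ = r ^ (K + 1) * a 0 + ∑ i ∈ range (K + 1), r ^ i * e (K + 1 - i) := by
        simp only [sum_range_succ', Nat.add_sub_add_right, Nat.sub_zero, pow_zero, one_mul,
          pow_succ', mul_assoc, mul_add, mul_sum]
        ring

theorem Real.one_sub_pow_le_exp_neg_mul {η : ℝ} (hη : η ≤ 1) (K : ℕ) :
    (1 - η) ^ K ≤ Real.exp (-η * K) :=
  calc (1 - η) ^ K ≤ Real.exp (-η) ^ K :=
        pow_le_pow_left₀ (by linarith) (Real.one_sub_le_exp_neg η) K
    _ = Real.exp (-η * K) := by rw [← Real.exp_nat_mul]; ring_nf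

theorem le_exp_add_div_add_of_le_one_sub_mul_add {a e : ℕ → ℝ} {η c A E : ℝ} (hη₀ : 0 < η)
    (hη₁ : η ≤ 1) (hc : 0 ≤ c) (hA : 0 ≤ A) (he₀ : 0 ≤ e 0)
    (h : ∀ k, a (k + 1) ≤ (1 - η) * a k + (c + e (k + 1))) (ha₀ : a 0 ≤ A)
    (he : ∀ k, ∑ i ∈ range (k + 1), (1 - η) ^ i * e (k - i) ≤ E) (K : ℕ) :
    a K ≤ A * Real.exp (-η * K) + c / η + E := by
  have hr : 0 ≤ 1 - η := sub_nonneg.2 hη₁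
  have hunroll := le_pow_mul_add_sum_of_le_mul_add (e := fun k => c + e k) hr h K
  simp only [mul_add, sum_add_distrib, ← sum_mul] at hunroll
  have hdecay : (1 - η) ^ K * a 0 ≤ A * Real.exp (-η * K) :=
    calc (1 - η) ^ K * a 0 ≤ (1 - η) ^ K * A := by gcongr
      _ ≤ Real.exp (-η * K) * A := by gcongr; exact Real.one_sub_pow_le_exp_neg_mul hη₁ K
      _ = A * Real.exp (-η * K) := mul_comm _ _
  have hgeom : (∑ i ∈ range K, (1 - η) ^ i) * c ≤ c / η := by
    have hsum := geom_sum_Ico_le_of_lt_one (m := 0) (n := K) hr (by linarith)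
    rw [← range_eq_Ico, pow_zero, sub_sub_cancel] at hsum
    calc (∑ i ∈ range K, (1 - η) ^ i) * c ≤ 1 / η * c := by gcongr
      _ = c / η := one_div_mul_eq_div η c
  have htail : ∑ i ∈ range K, (1 - η) ^ i * e (K - i) ≤ E := by
    have hK := he K
    rw [sum_range_succ, Nat.sub_self] at hK
    linarith [mul_nonneg (pow_nonneg hr K) he₀]
  linarith

theorem stmt_11_general {n : ℕ} (D : Set (EuclideanSpace ℝ (Fin n)))
    (hD : Convex ℝ D)
    (hdiam : ∀ x ∈ D, ∀ y ∈ D, ‖x - y‖ ≤ 2)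
    (f : ℕ → EuclideanSpace ℝ (Fin n) → ℝ)
    (β B Δ ε₀ η : ℝ) (hβ : 0 < β) (hB : 0 < B)
    (hε₀ : 0 ≤ ε₀) (hη : η ∈ Set.Ioo (0:ℝ) 1)
    (hconc : ∀ k, ConcaveOn ℝ D (f k))
    (hdiff : ∀ k, Differentiable ℝ (f k))
    (hsmooth : ∀ k, ∀ x v : EuclideanSpace ℝ (Fin n), x ∈ D → x + v ∈ D →
      f k (x + v) ≥ f k x + (inner ℝ v (gradient (f k) x) : ℝ) - β * ‖v‖ ^ 2)
    (hfB : ∀ k, ∀ x ∈ D, |f k x| ≤ B)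
    (d u : ℕ → EuclideanSpace ℝ (Fin n)) (dstar : EuclideanSpace ℝ (Fin n))
    (hd0 : d 0 ∈ D) (hu : ∀ k, u k ∈ D) (hdstar : dstar ∈ D)
    (hiter : ∀ k, d (k + 1) = (1 - η) • d k + η • u (k + 1))
    (hplan : ∀ k, (inner ℝ (u (k + 1)) (gradient (f (k + 1)) (d k)) : ℝ)
        ≥ (inner ℝ dstar (gradient (f (k + 1)) (d k)) : ℝ) - ε₀)
    (δ : ℕ → ℝ)
    (hdrift : ∀ k, ∀ x ∈ D, |f (k + 1) x - f k x| ≤ δ k)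
    (hδsum : ∀ k, ∑ i ∈ Finset.range (k + 1), (1 - η) ^ i * δ (k - i) ≤ Δ) :
    ∀ K : ℕ, 1 ≤ K →
      f (K + 1) dstar - f (K + 1) (d K)
        ≤ 2 * B * Real.exp (-η * K) + ε₀ + 4 * η * β + 2 * Δ := by
  obtain ⟨hη₀, hη₁⟩ := hη
  have hdD : ∀ k, d k ∈ D := by
    intro k
    induction k with
    | zero => exact hd0
    | succ k ih => exact hiter k ▸ hD ih (hu (k + 1)) (by linarith) hη₀.le (by ring)
  set gap : ℕ → ℝ := fun k => f (k + 1) dstar - f (k + 1) (d k) with hgap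
  have hstep (k : ℕ) :
      gap (k + 1) ≤ (1 - η) * gap k + (η * ε₀ + β * (η * 2) ^ 2 + 2 * δ (k + 1)) := by
    have hFW := (hconc (k + 1)).sub_le_of_frankWolfe_step (hdiff (k + 1) (d k))
      (hsmooth (k + 1)) hβ.le hη₀.le hη₁.le (hdD k) (hu (k + 1)) hdstar
      (hdiam _ (hu (k + 1)) _ (hdD k)) (hplan k)
    rw [← hiter k] at hFW
    have hz := abs_le.1 (hdrift (k + 1) dstar hdstar)
    have hx := abs_le.1 (hdrift (k + 1) _ (hdD (k + 1)))
    simp only [hgap]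
    linarith
  have hgap₀ : gap 0 ≤ 2 * B := by
    linarith [(abs_le.1 (hfB 1 dstar hdstar)).2, (abs_le.1 (hfB 1 _ hd0)).1]
  have hδ₀ : 0 ≤ 2 * δ 0 := by linarith [(abs_nonneg _).trans (hdrift 0 _ hd0)]
  have hδsum₂ (k : ℕ) : ∑ i ∈ range (k + 1), (1 - η) ^ i * (2 * δ (k - i)) ≤ 2 * Δ := by
    simpa only [mul_left_comm _ (2 : ℝ), ← mul_sum] using
      mul_le_mul_of_nonneg_left (hδsum k) two_pos.le
  intro K _
  calc gap K ≤ 2 * B * Real.exp (-η * K) + (η * ε₀ + β * (η * 2) ^ 2) / η + 2 * Δ :=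
        le_exp_add_div_add_of_le_one_sub_mul_add (e := fun k => 2 * δ k) hη₀ hη₁.le
          (by positivity) (by positivity) hδ₀ hstep hgap₀ hδsum₂ K
    _ = 2 * B * Real.exp (-η * K) + ε₀ + 4 * η * β + 2 * Δ := by field_simp; ring

theorem stmt_11 {n : ℕ} (D : Set (EuclideanSpace ℝ (Fin n)))
    (hD : Convex ℝ D)
    (hdiam : ∀ x ∈ D, ∀ y ∈ D, ‖x - y‖ ≤ 2)
    (f : ℕ → EuclideanSpace ℝ (Fin n) → ℝ)
    (β B Δ ε₀ η : ℝ) (hβ : 0 < β) (hB : 0 < B) (hΔ : 0 < Δ)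
    (hε₀ : 0 ≤ ε₀) (hη : η ∈ Set.Ioo (0:ℝ) 1)
    (hconc : ∀ k, ConcaveOn ℝ D (f k))
    (hdiff : ∀ k, Differentiable ℝ (f k))
    (hsmooth : ∀ k, ∀ x v : EuclideanSpace ℝ (Fin n), x ∈ D → x + v ∈ D →
      f k (x + v) ≥ f k x + (inner ℝ v (gradient (f k) x) : ℝ) - β * ‖v‖ ^ 2)
    (hfB : ∀ k, ∀ x ∈ D, |f k x| ≤ B)
    (hgB : ∀ k, ∀ x ∈ D, ∀ i : Fin n, |gradient (f k) x i| ≤ B)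
    (d u : ℕ → EuclideanSpace ℝ (Fin n)) (dstar : EuclideanSpace ℝ (Fin n))
    (hd0 : d 0 ∈ D) (hu : ∀ k, u k ∈ D) (hdstar : dstar ∈ D)
    (hiter : ∀ k, d (k + 1) = (1 - η) • d k + η • u (k + 1))
    (hplan : ∀ k, (inner ℝ (u (k + 1)) (gradient (f (k + 1)) (d k)) : ℝ)
        ≥ (inner ℝ dstar (gradient (f (k + 1)) (d k)) : ℝ) - ε₀)
    (δ : ℕ → ℝ)
    (hdrift : ∀ k, ∀ x ∈ D, |f (k + 1) x - f k x| ≤ δ k)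
    (hδsum : ∀ k, ∑ i ∈ Finset.range (k + 1), (1 - η) ^ i * δ (k - i) ≤ Δ) :
    ∀ K : ℕ, 1 ≤ K →
      f (K + 1) dstar - f (K + 1) (d K)
        ≤ 2 * B * Real.exp (-η * K) + ε₀ + 4 * η * β + 2 * Δ :=
  stmt_11_general D hD hdiam f β B Δ ε₀ η hβ hB hε₀ hη hconc hdiff hsmooth hfB d u dstar hd0 hu
    hdstar hiter hplan δ hdrift hδsum
end
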